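/- (Higher Dirac propagation principle) Let Δ be a proper geometric simplicial complex and ω a linear differential such that, for some k ≥ 0, (Δ,ω) is toric k-chordal and Δ has no missing faces of dimension k+1. Then (Δ,ω) is toric (k+1)-chordal. -/

import Mathlib

open MvPolynomial

open MvPolynomial

/-- An abstract simplicial complex on the vertex set `Fin n`:
a collection of finite subsets closed under taking subsets. -/
def IsComplex {n : ℕ} (Δ : Set (Finset (Fin n))) : Prop :=
  ∀ σ ∈ Δ, ∀ τ ⊆ σ, τ ∈ Δ

/-- The vertex set `Δ^(0)` of a simplicial complex. -/
def verts {n : ℕ} (Δ : Set (Finset (Fin n))) : Set (Fin n) := {v | {v} ∈ Δ}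

/-- The partial derivative `∂/∂xᵢ` as a linear endomorphism of `ℝ[x₁,…,xₙ]`. -/
noncomputable def pd {n : ℕ} (i : Fin n) : Module.End ℝ (MvPolynomial (Fin n) ℝ) :=
  (pderiv i).toLinearMap

/-- The constant coefficient differential operator `(x^a)^∨ = ∏ᵢ (∂/∂xᵢ)^(aᵢ)`. -/
noncomputable def monDiff {n : ℕ} (a : Fin n →₀ ℕ) : Module.End ℝ (MvPolynomial (Fin n) ℝ) :=
  ((List.finRange n).map fun i => pd i ^ a i).prod

/-- The stress space `S̃(Δ)`: polynomials annihilated by `q^∨` for every `q` in the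
nonface ideal `I_Δ` (equivalently, by `(x^a)^∨` for every monomial generator `x^a` of `I_Δ`). -/
noncomputable def tStress {n : ℕ} (Δ : Set (Finset (Fin n))) :
    Submodule ℝ (MvPolynomial (Fin n) ℝ) :=
  ⨅ a ∈ {a : Fin n →₀ ℕ | a.support ∉ Δ}, LinearMap.ker (monDiff a)

/-- A linear differential `Σᵢ cᵢ ∂/∂xᵢ`. -/
noncomputable def linDiff {n : ℕ} (c : Fin n → ℝ) : Module.End ℝ (MvPolynomial (Fin n) ℝ) :=
  ∑ i, c i • pd i

/-- The canonical differential `δ = Σᵢ ∂/∂xᵢ`. -/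
noncomputable def canDiff (n : ℕ) : Module.End ℝ (MvPolynomial (Fin n) ℝ) :=
  linDiff fun _ => (1 : ℝ)

/-- The coordinate differential `θⱼ = Σᵢ (vᵢ)ⱼ ∂/∂xᵢ` of a geometric simplicial complex. -/
noncomputable def coordDiff {n d : ℕ} (V : Fin n → Fin d → ℝ) (j : Fin d) :
    Module.End ℝ (MvPolynomial (Fin n) ℝ) :=
  linDiff fun i => V i j

/-- The stress space `S(Δ)` of a geometric simplicial complex with vertex coordinates `V`. -/
noncomputable def stress {n d : ℕ} (V : Fin n → Fin d → ℝ) (Δ : Set (Finset (Fin n))) :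
    Submodule ℝ (MvPolynomial (Fin n) ℝ) :=
  tStress Δ ⊓ ⨅ j : Fin d, LinearMap.ker (coordDiff V j)

/-- The degree-`k` graded piece `S_k(Δ)` of the stress space. -/
noncomputable def stressK {n d : ℕ} (V : Fin n → Fin d → ℝ) (Δ : Set (Finset (Fin n)))
    (k : ℕ) : Submodule ℝ (MvPolynomial (Fin n) ℝ) :=
  stress V Δ ⊓ homogeneousSubmodule (Fin n) ℝ k

/-- A geometric simplicial complex in `ℝ^d` is proper if the coordinates of each face of
dimension `< d` are linearly independent. -/
def IsProper {n d : ℕ} (V : Fin n → Fin d → ℝ) (Δ : Set (Finset (Fin n))) : Prop :=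
  ∀ σ ∈ Δ, σ.card ≤ d → LinearIndependent ℝ (fun i : {x // x ∈ σ} => V i.1)

/-- The star of a face. -/
def cStar {n : ℕ} (Δ : Set (Finset (Fin n))) (σ : Finset (Fin n)) : Set (Finset (Fin n)) :=
  {τ ∈ Δ | σ ∪ τ ∈ Δ}

/-- The star of a vertex. -/
def vStar {n : ℕ} (Δ : Set (Finset (Fin n))) (v : Fin n) : Set (Finset (Fin n)) :=
  cStar Δ {v}

/-- The boundary `∂St_v Δ` of the star of a vertex: faces of the star not containing `v`. -/
def vStarBd {n : ℕ} (Δ : Set (Finset (Fin n))) (v : Fin n) : Set (Finset (Fin n)) :=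
  {τ ∈ vStar Δ v | v ∉ τ}

/-- The link of a face. -/
def lk {n : ℕ} (Δ : Set (Finset (Fin n))) (σ : Finset (Fin n)) : Set (Finset (Fin n)) :=
  {τ | Disjoint σ τ ∧ σ ∪ τ ∈ Δ}

/-- The vertex set `γ^(0)` of the support of a stress `γ`. -/
noncomputable def stressVerts {n : ℕ} (γ : MvPolynomial (Fin n) ℝ) : Finset (Fin n) :=
  γ.support.biUnion fun a => a.support

/-- `g_k = dim S_k − dim S_{k−1}` (with `S_{−1} = 0`). -/
noncomputable def gnum {n d : ℕ} (V : Fin n → Fin d → ℝ) (Δ : Set (Finset (Fin n)))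
    (k : ℕ) : ℤ :=
  (Module.finrank ℝ ↥(stressK V Δ k) : ℤ) -
    if k = 0 then 0 else (Module.finrank ℝ ↥(stressK V Δ (k - 1)) : ℤ)

/-- The homogenizing embedding `ℝ^d → ℝ^d × {1} ⊆ ℝ^{d+1}` applied to vertex coordinates. -/
noncomputable def homV {n d : ℕ} (p : Fin n → Fin d → ℝ) : Fin n → Fin (d + 1) → ℝ :=
  fun i => Fin.snoc (p i) 1

/-- `Δ` is the boundary complex of the simplicial `d`-polytope `conv{p 1, …, p n}`:
the polytope is full-dimensional, every `p i` is a vertex, the faces of `Δ` are exactly the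
vertex sets cut out by supporting hyperplanes, and every proper face is a simplex. -/
def IsSimplicialPolytopeBoundary {n d : ℕ} (p : Fin n → Fin d → ℝ)
    (Δ : Set (Finset (Fin n))) : Prop :=
  affineSpan ℝ (Set.range p) = ⊤ ∧
  (∀ i, p i ∉ convexHull ℝ (p '' {j | j ≠ i})) ∧
  (∀ σ ∈ Δ, AffineIndependent ℝ (fun i : {x // x ∈ σ} => p i.1)) ∧
  (∀ σ : Finset (Fin n), σ ∈ Δ ↔
    ∃ (f : (Fin d → ℝ) →ₗ[ℝ] ℝ) (c : ℝ),
      (∃ i, f (p i) < c) ∧ (∀ i, f (p i) ≤ c) ∧ (∀ i, f (p i) = c ↔ i ∈ σ))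

/-- The simplicial boundary operator (with real coefficients), on the free module spanned by
all finite subsets of `Fin n`; the empty set plays the role of the `(−1)`-face, so that the
associated homology is reduced. -/
noncomputable def bdry {n : ℕ} : (Finset (Fin n) →₀ ℝ) →ₗ[ℝ] (Finset (Fin n) →₀ ℝ) :=
  Finsupp.lsum ℝ fun σ => LinearMap.toSpanSingleton ℝ _
    (∑ i ∈ σ, ((-1 : ℝ) ^ (σ.filter (· < i)).card) • Finsupp.single (σ.erase i) (1 : ℝ))

/-- The space of simplicial `k`-chains of `Δ` (spanned by faces of `Δ` of dimension `k`). -/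
noncomputable def chains {n : ℕ} (Δ : Set (Finset (Fin n))) (k : ℤ) :
    Submodule ℝ (Finset (Fin n) →₀ ℝ) :=
  Finsupp.supported ℝ ℝ {σ | σ ∈ Δ ∧ (σ.card : ℤ) = k + 1}

/-- Reduced simplicial `k`-cycles of `Δ`. -/
noncomputable def cycles {n : ℕ} (Δ : Set (Finset (Fin n))) (k : ℤ) :
    Submodule ℝ (Finset (Fin n) →₀ ℝ) :=
  chains Δ k ⊓ LinearMap.ker bdry

/-- Simplicial `k`-boundaries of `Δ`. -/
noncomputable def bdries {n : ℕ} (Δ : Set (Finset (Fin n))) (k : ℤ) :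
    Submodule ℝ (Finset (Fin n) →₀ ℝ) :=
  Submodule.map bdry (chains Δ (k + 1))

/-- The reduced Betti number `β̃_k(Δ)` (with real coefficients). -/
noncomputable def rBetti {n : ℕ} (Δ : Set (Finset (Fin n))) (k : ℤ) : ℕ :=
  Module.finrank ℝ ↥(cycles Δ k) - Module.finrank ℝ ↥(bdries Δ k)

/-- The induced subcomplex `Δ_W` on a vertex set `W`. -/
def induced {n : ℕ} (Δ : Set (Finset (Fin n))) (W : Finset (Fin n)) : Set (Finset (Fin n)) :=
  {σ ∈ Δ | σ ⊆ W}

/-- The vertex set of the support of a simplicial chain. -/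
def chainVerts {n : ℕ} (c : Finset (Fin n) →₀ ℝ) : Finset (Fin n) :=
  c.support.biUnion id

/-- `Δ` is resolution `k`-chordal: every `k`-cycle `z` admits a resolution, i.e. a
`(k+1)`-chain `c` with `∂c = z` and `c^(0) = z^(0)`. -/
def ResolutionChordal {n : ℕ} (Δ : Set (Finset (Fin n))) (k : ℤ) : Prop :=
  ∀ z ∈ cycles Δ k, ∃ c ∈ chains Δ (k + 1), bdry c = z ∧ chainVerts c = chainVerts z

/-- `(Δ, ω)` is toric `k`-chordal: `ω : S_{k+1}(Δ) → S_k(Δ)` is surjective and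
`ω : S_k(Δ) → S_{k−1}(Δ)` is injective. -/
def ToricChordal {n d : ℕ} (V : Fin n → Fin d → ℝ) (Δ : Set (Finset (Fin n)))
    (ω : Module.End ℝ (MvPolynomial (Fin n) ℝ)) (k : ℕ) : Prop :=
  (∀ γ ∈ stressK V Δ k, ∃ γ' ∈ stressK V Δ (k + 1), ω γ' = γ) ∧
  (∀ γ ∈ stressK V Δ k, ω γ = 0 → γ = 0)

/-- `(Δ, ω)` is weakly toric `k`-chordal: `ω : S_k(St_v Δ) → S_{k−1}(St_v Δ)` is injective
for every vertex `v` of `Δ`. -/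
def WeaklyToricChordal {n d : ℕ} (V : Fin n → Fin d → ℝ) (Δ : Set (Finset (Fin n)))
    (ω : Module.End ℝ (MvPolynomial (Fin n) ℝ)) (k : ℕ) : Prop :=
  ∀ v ∈ verts Δ, ∀ γ ∈ stressK V (vStar Δ v) k, ω γ = 0 → γ = 0

/-- A missing face of `Δ`: a nonface all of whose proper subsets are faces. -/
def IsMissingFace {n : ℕ} (Δ : Set (Finset (Fin n))) (σ : Finset (Fin n)) : Prop :=
  σ ∉ Δ ∧ ∀ τ ⊂ σ, τ ∈ Δ

/-- Representatives of relative `k`-stresses of the relative complex `(Δ', Γ)`: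
homogeneous degree-`k` elements of `S̃(Δ')` whose image under each coordinate differential
lies in `S̃(Γ)`.  The relative stress space `S_k(Δ', Γ)` is the quotient of this space by
(the degree-`k` part of) `S̃(Γ)`. -/
noncomputable def relStressK {n d : ℕ} (V : Fin n → Fin d → ℝ)
    (Δ' Γ : Set (Finset (Fin n))) (k : ℕ) : Submodule ℝ (MvPolynomial (Fin n) ℝ) :=
  tStress Δ' ⊓ homogeneousSubmodule (Fin n) ℝ k ⊓
    ⨅ j : Fin d, (tStress Γ).comap (coordDiff V j)

/-- A shelling of a pure `(d−1)`-dimensional simplicial complex: a linear order on the facets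
such that the intersection of each facet with the union of all subsequent facets is a pure
`(d−2)`-dimensional complex or empty. -/
def IsShelling {n : ℕ} (Δ : Set (Finset (Fin n))) (d : ℕ) (L : List (Finset (Fin n))) : Prop :=
  L.Nodup ∧ (∀ σ, σ ∈ L ↔ σ ∈ Δ ∧ σ.card = d) ∧
  (∀ σ ∈ Δ, ∃ F ∈ L, σ ⊆ F) ∧
  ∀ (i : ℕ) (hi : i < L.length) (τ : Finset (Fin n)), τ ⊆ L.get ⟨i, hi⟩ →
    (∃ (j : ℕ) (hj : j < L.length), i < j ∧ τ ⊆ L.get ⟨j, hj⟩) →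
    ∃ ρ, τ ⊆ ρ ∧ ρ ⊆ L.get ⟨i, hi⟩ ∧ ρ.card = d - 1 ∧
      ∃ (j : ℕ) (hj : j < L.length), i < j ∧ ρ ⊆ L.get ⟨j, hj⟩

/-- The degree-`k` graded piece of the stress space `S̃(Δ)`. -/
noncomputable def tStressK {n : ℕ} (Δ : Set (Finset (Fin n))) (k : ℕ) :
    Submodule ℝ (MvPolynomial (Fin n) ℝ) :=
  tStress Δ ⊓ homogeneousSubmodule (Fin n) ℝ k

/-- A sequence `θ` of linear differentials is regular up to degree `k` on `S̃(Δ)`: each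
`θ_j` maps the degree-`(i+1)` part of the common kernel of `θ_1, …, θ_{j−1}` in `S̃(Δ)` onto
the degree-`i` part, for every `i ≤ k`. -/
def RegularUpTo {n : ℕ} (Δ : Set (Finset (Fin n)))
    (θ : List (Module.End ℝ (MvPolynomial (Fin n) ℝ))) (k : ℕ) : Prop :=
  ∀ j < θ.length, ∀ i ≤ k,
    ∀ γ ∈ tStressK Δ i ⊓ ⨅ l ∈ Finset.range j, LinearMap.ker (θ.getD l 0),
      ∃ γ' ∈ tStressK Δ (i + 1) ⊓ ⨅ l ∈ Finset.range j, LinearMap.ker (θ.getD l 0),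
        θ.getD j 0 γ' = γ

/-- `dim Δ + 1`: the maximal cardinality of a face. -/
noncomputable def dim1 {n : ℕ} (Δ : Set (Finset (Fin n))) : ℕ :=
  sSup {m | ∃ σ ∈ Δ, σ.card = m}

/-- `Δ` is Cohen–Macaulay over `ℝ`: the reduced homology of every face link vanishes below
the expected dimension. -/
def IsCM {n : ℕ} (Δ : Set (Finset (Fin n))) : Prop :=
  ∀ σ ∈ Δ, ∀ i : ℤ, i < (dim1 Δ : ℤ) - 1 - σ.card →
    cycles (lk Δ σ) i ≤ bdries (lk Δ σ) i

/-- `(q, T)` is a triangulation of the simplicial polytope `P = conv{p i}` whose faces contained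
in the boundary `∂P` form exactly the boundary complex `Δ` of `P`. -/
def IsTriangulation {n d m : ℕ} (p : Fin n → Fin d → ℝ) (Δ : Set (Finset (Fin n)))
    (q : Fin m → Fin d → ℝ) (T : Set (Finset (Fin m))) : Prop :=
  IsComplex T ∧
  (∀ σ ∈ T, AffineIndependent ℝ (fun i : {x // x ∈ σ} => q i.1)) ∧
  (∀ σ ∈ T, ∀ τ ∈ T,
    convexHull ℝ (q '' ↑σ) ∩ convexHull ℝ (q '' ↑τ) = convexHull ℝ (q '' ↑(σ ∩ τ))) ∧
  (⋃ σ ∈ T, convexHull ℝ (q '' ↑σ)) = convexHull ℝ (Set.range p) ∧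
  {s : Set (Fin d → ℝ) | ∃ σ ∈ T,
      convexHull ℝ (q '' ↑σ) ⊆ frontier (convexHull ℝ (Set.range p)) ∧ s = q '' ↑σ}
    = {s : Set (Fin d → ℝ) | ∃ σ ∈ Δ, s = p '' ↑σ}

/-- The restriction `Δ_S` of a balanced complex to the set `S` of colors. -/
def colorRestrict {n d : ℕ} (Δ : Set (Finset (Fin n))) (col : Fin n → Fin d)
    (S : Finset (Fin d)) : Set (Finset (Fin n)) :=
  {σ ∈ Δ | ∀ v ∈ σ, col v ∈ S}

/-
Injectivity in degree `k + 1` follows from injectivity in degree `k`, because `ω`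
commutes with every `∂ᵢ` and a homogeneous polynomial of positive degree is determined by its
partial derivatives. For surjectivity, lift each `∂ᵢγ` to some `gᵢ ∈ S_{k+1}`; injectivity in
degree `k` forces `∂ⱼgᵢ = ∂ᵢgⱼ`, so by Euler's identity `γ' = (k+2)⁻¹ Σᵢ xᵢgᵢ` has `∂ᵢγ' = gᵢ`,
and `ωγ' = γ`. Finally `γ'` is a stress: a nonface contains a missing face `τ`, with
`|τ| ≠ k + 2`, and `∂^τ γ'` vanishes for degree reasons when `|τ| > k + 2`, and because all its
partial derivatives `∂^τ gᵢ` vanish when `|τ| < k + 2`.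
-/

theorem List.prod_map_mul_of_commute {ι M : Type*} [Monoid M] {f g : ι → M}
    (h : ∀ i j, Commute (g i) (f j)) :
    ∀ l : List ι, (l.map fun i => f i * g i).prod = (l.map f).prod * (l.map g).prod
  | [] => by simp
  | i :: l => by
    have hc : Commute (g i) (l.map f).prod := Commute.list_prod_right _ _ fun _ hx => by
      obtain ⟨j, -, rfl⟩ := List.mem_map.mp hx
      exact h i j
    simp only [List.map_cons, List.prod_cons, List.prod_map_mul_of_commute h l]
    rw [mul_assoc, ← mul_assoc (g i), hc.eq, mul_assoc, ← mul_assoc]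

theorem Finsupp.exists_le_support_eq {σ : Type*} {a : σ →₀ ℕ} {τ : Finset σ}
    (hτ : τ ⊆ a.support) : ∃ b ≤ a, b.support = τ ∧ b.degree = τ.card := by
  classical
  let b : σ →₀ ℕ := Finsupp.indicator τ fun _ _ => 1
  have hb : ∀ i, b i = if i ∈ τ then 1 else 0 := fun i => by
    by_cases hi : i ∈ τ <;> simp [b, hi]
  have hsupp : b.support = τ := by
    ext i; simp [hb]
  refine ⟨b, fun i => ?_, hsupp, ?_⟩
  · by_cases hi : i ∈ τ
    · simpa [hb, hi, Nat.one_le_iff_ne_zero] using hτ hi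
    · simp [hb, hi]
  · rw [Finsupp.degree_apply, hsupp, Finset.card_eq_sum_ones]
    exact Finset.sum_congr rfl fun i hi => by simp [hb, hi]

namespace MvPolynomial

variable {σ : Type*}

theorem pderiv_comm {R : Type*} [CommSemiring R] (i j : σ) (p : MvPolynomial σ R) :
    pderiv i (pderiv j p) = pderiv j (pderiv i p) := by
  classical
  ext m
  rcases eq_or_ne i j with rfl | hij
  · rfl
  simp only [coeff_pderiv, Finsupp.coe_add, Pi.add_apply, ne_eq, hij, hij.symm, not_false_eq_true,
    Finsupp.single_eq_of_ne, add_zero, add_right_comm m]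
  ring

section CharZero

variable {K : Type*} [Field K] [CharZero K] [Fintype σ]

theorem IsHomogeneous.eq_zero_of_forall_pderiv_eq_zero {p : MvPolynomial σ K} {m : ℕ}
    (hp : p.IsHomogeneous m) (hm : m ≠ 0) (h : ∀ i, pderiv i p = 0) : p = 0 := by
  have euler := hp.sum_X_mul_pderiv
  simp only [h, mul_zero, Finset.sum_const_zero] at euler
  exact (smul_eq_zero.mp euler.symm).resolve_left hm

theorem IsHomogeneous.eq_of_forall_pderiv_eq {p q : MvPolynomial σ K} {m : ℕ}
    (hp : p.IsHomogeneous m) (hq : q.IsHomogeneous m) (hm : m ≠ 0)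
    (h : ∀ i, pderiv i p = pderiv i q) : p = q :=
  sub_eq_zero.mp <| (hp.sub hq).eq_zero_of_forall_pderiv_eq_zero hm fun i => by
    rw [map_sub, h, sub_self]

/-- By Euler's identity, `(m + 1)⁻¹ Σⱼ Xⱼ gⱼ` is a potential. -/
theorem exists_isHomogeneous_pderiv_eq {g : σ → MvPolynomial σ K} {m : ℕ}
    (hg : ∀ i, (g i).IsHomogeneous m) (hcl : ∀ i j, pderiv i (g j) = pderiv j (g i)) :
    ∃ f : MvPolynomial σ K, f.IsHomogeneous (m + 1) ∧ ∀ i, pderiv i f = g i := by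
  classical
  refine ⟨((m : K) + 1)⁻¹ • ∑ j, X j * g j, ?_, fun i => ?_⟩
  · rw [← mem_homogeneousSubmodule]
    refine Submodule.smul_mem _ _ (Submodule.sum_mem _ fun j _ => ?_)
    rw [mem_homogeneousSubmodule, add_comm]
    exact (isHomogeneous_X K j).mul (hg j)
  · have hsum : ∑ j, pderiv i (X j * g j) = ((m : K) + 1) • g i := by
      simp only [Derivation.leibniz, pderiv_X, smul_eq_mul, Finset.sum_add_distrib, hcl i,
        (hg i).sum_X_mul_pderiv]
      simp [Pi.single_apply, add_smul, add_comm, Nat.cast_smul_eq_nsmul]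
    rw [Derivation.map_smul, map_sum, hsum, smul_smul, inv_mul_cancel₀ (Nat.cast_add_one_ne_zero m),
      one_smul]

end CharZero

section LowersDegree

variable {R : Type*} [CommSemiring R]

/-- The second clause is needed because `m - t` truncates to `0` when `m < t`. -/
def LowersDegree (f : Module.End R (MvPolynomial σ R)) (t : ℕ) : Prop :=
  ∀ ⦃m : ℕ⦄ ⦃p : MvPolynomial σ R⦄, p.IsHomogeneous m →
    (f p).IsHomogeneous (m - t) ∧ (m < t → f p = 0)

namespace LowersDegree

theorem one : LowersDegree (1 : Module.End R (MvPolynomial σ R)) 0 :=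
  fun _ _ hp => ⟨hp, fun h => absurd h (Nat.not_lt_zero _)⟩

theorem mul {f g : Module.End R (MvPolynomial σ R)} {s t : ℕ} (hf : LowersDegree f s)
    (hg : LowersDegree g t) : LowersDegree (f * g) (s + t) := by
  intro m p hp
  obtain ⟨hgp, hgp0⟩ := hg hp
  obtain ⟨hfgp, hfgp0⟩ := hf hgp
  refine ⟨by rwa [Nat.sub_add_eq, Nat.sub_right_comm], fun hm => ?_⟩
  rcases lt_or_ge m t with hmt | htm
  · rw [Module.End.mul_apply, hgp0 hmt, map_zero]
  · exact hfgp0 (by omega)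

theorem pow {f : Module.End R (MvPolynomial σ R)} {t : ℕ} (hf : LowersDegree f t) :
    ∀ k : ℕ, LowersDegree (f ^ k) (k * t)
  | 0 => by simpa using one
  | k + 1 => by simpa [pow_succ', add_mul, add_comm] using hf.mul (pow hf k)

theorem list_prod {ι : Type*} {f : ι → Module.End R (MvPolynomial σ R)} {t : ι → ℕ}
    (hf : ∀ i, LowersDegree (f i) (t i)) :
    ∀ l : List ι, LowersDegree (l.map f).prod (l.map t).sum
  | [] => one
  | i :: l => by simpa using (hf i).mul (list_prod hf l)

end LowersDegree

theorem lowersDegree_pderiv (i : σ) :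
    LowersDegree (pderiv i : Derivation R _ _).toLinearMap 1 := by
  intro m p hp
  refine ⟨hp.pderiv, fun hm => ?_⟩
  obtain rfl : m = 0 := by omega
  rw [← totalDegree_zero_iff_isHomogeneous, totalDegree_eq_zero_iff_eq_C] at hp
  change pderiv i p = 0
  rw [hp, pderiv_C]

end LowersDegree

end MvPolynomial

section Operators

variable {n : ℕ}

theorem pd_commute (i j : Fin n) : Commute (pd i) (pd j) :=
  LinearMap.ext fun p => pderiv_comm (R := ℝ) i j p

theorem monDiff_commute_pd (a : Fin n →₀ ℕ) (i : Fin n) : Commute (monDiff a) (pd i) :=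
  Commute.list_prod_left _ _ fun _ hx => by
    obtain ⟨j, -, rfl⟩ := List.mem_map.mp hx
    exact (pd_commute j i).pow_left _

theorem linDiff_commute_pd (c : Fin n → ℝ) (i : Fin n) : Commute (linDiff c) (pd i) :=
  Commute.sum_left _ _ _ fun j _ => (pd_commute j i).smul_left (c j)

theorem monDiff_pderiv_apply (a : Fin n →₀ ℕ) (i : Fin n) (p : MvPolynomial (Fin n) ℝ) :
    monDiff a (pderiv i p) = pderiv i (monDiff a p) :=
  LinearMap.congr_fun (monDiff_commute_pd a i).eq p

theorem linDiff_pderiv_apply (c : Fin n → ℝ) (i : Fin n) (p : MvPolynomial (Fin n) ℝ) :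
    linDiff c (pderiv i p) = pderiv i (linDiff c p) :=
  LinearMap.congr_fun (linDiff_commute_pd c i).eq p

theorem monDiff_add (a b : Fin n →₀ ℕ) : monDiff (a + b) = monDiff a * monDiff b := by
  simp only [monDiff, Finsupp.add_apply, pow_add]
  exact List.prod_map_mul_of_commute (fun i j => (pd_commute i j).pow_pow _ _) _

theorem lowersDegree_monDiff (a : Fin n →₀ ℕ) : LowersDegree (monDiff a) a.degree := by
  have h := LowersDegree.list_prod (fun i => (lowersDegree_pderiv (R := ℝ) i).pow (a i))
    (List.finRange n)
  simp only [mul_one] at h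
  rwa [Finsupp.degree_eq_sum, Fin.sum_univ_def]

theorem isHomogeneous_linDiff (c : Fin n → ℝ) {p : MvPolynomial (Fin n) ℝ} {m : ℕ}
    (hp : p.IsHomogeneous m) : (linDiff c p).IsHomogeneous (m - 1) := by
  rw [← mem_homogeneousSubmodule, linDiff, LinearMap.sum_apply]
  exact Submodule.sum_mem _ fun i _ => Submodule.smul_mem _ _ hp.pderiv

end Operators

theorem exists_isMissingFace_subset {n : ℕ} {Δ : Set (Finset (Fin n))} {σ : Finset (Fin n)}
    (hσ : σ ∉ Δ) : ∃ τ ⊆ σ, IsMissingFace Δ τ := by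
  obtain ⟨τ, hτσ, hτ⟩ := exists_minimal_le_of_wellFoundedLT (· ∉ Δ) σ hσ
  exact ⟨τ, hτσ, hτ.prop, fun ρ hρ => by_contra fun hρΔ => hρ.not_ge (hτ.le_of_le hρΔ hρ.le)⟩

section Stress

variable {n d : ℕ} {V : Fin n → Fin d → ℝ} {Δ : Set (Finset (Fin n))}

theorem mem_tStress_iff {γ : MvPolynomial (Fin n) ℝ} :
    γ ∈ tStress Δ ↔ ∀ a : Fin n →₀ ℕ, a.support ∉ Δ → monDiff a γ = 0 := by
  simp [tStress, Submodule.mem_iInf]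

theorem mem_stressK_iff {k : ℕ} {γ : MvPolynomial (Fin n) ℝ} :
    γ ∈ stressK V Δ k ↔
      (γ ∈ tStress Δ ∧ ∀ j, coordDiff V j γ = 0) ∧ γ.IsHomogeneous k := by
  simp [stressK, stress, Submodule.mem_iInf, mem_homogeneousSubmodule]

theorem pderiv_mem_stressK {k : ℕ} {γ : MvPolynomial (Fin n) ℝ} (h : γ ∈ stressK V Δ (k + 1))
    (i : Fin n) : pderiv i γ ∈ stressK V Δ k := by
  obtain ⟨⟨hγΔ, hγV⟩, hγk⟩ := mem_stressK_iff.mp h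
  refine mem_stressK_iff.mpr ⟨⟨mem_tStress_iff.mpr fun a ha => ?_, fun j => ?_⟩, hγk.pderiv⟩
  · rw [monDiff_pderiv_apply, mem_tStress_iff.mp hγΔ a ha, map_zero]
  · rw [coordDiff, linDiff_pderiv_apply, ← coordDiff, hγV j, map_zero]

theorem mem_tStress_of_forall_pderiv_mem {m : ℕ} {γ : MvPolynomial (Fin n) ℝ}
    (hγ : γ.IsHomogeneous m) (hpd : ∀ i, pderiv i γ ∈ tStress Δ)
    (hΔ : ∀ τ, IsMissingFace Δ τ → τ.card ≠ m) : γ ∈ tStress Δ := by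
  refine mem_tStress_iff.mpr fun a ha => ?_
  obtain ⟨τ, hτa, hτ⟩ := exists_isMissingFace_subset ha
  obtain ⟨b, hba, hbτ, hbdeg⟩ := Finsupp.exists_le_support_eq hτa
  suffices hb : monDiff b γ = 0 by
    rw [← tsub_add_cancel_of_le hba, monDiff_add, Module.End.mul_apply, hb, map_zero]
  obtain ⟨hbγ, hbγ0⟩ := lowersDegree_monDiff b hγ
  rcases lt_or_gt_of_ne (hbdeg ▸ hΔ τ hτ) with hlt | hgt
  · refine hbγ.eq_zero_of_forall_pderiv_eq_zero (by omega) fun j => ?_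
    rw [← monDiff_pderiv_apply]
    exact mem_tStress_iff.mp (hpd j) b (hbτ ▸ hτ.1)
  · exact hbγ0 hgt

theorem mem_stressK_of_forall_pderiv_mem {k : ℕ} {γ : MvPolynomial (Fin n) ℝ}
    (hγ : γ.IsHomogeneous (k + 2)) (hpd : ∀ i, pderiv i γ ∈ stressK V Δ (k + 1))
    (hΔ : ∀ τ, IsMissingFace Δ τ → τ.card ≠ k + 2) : γ ∈ stressK V Δ (k + 2) := by
  refine mem_stressK_iff.mpr ⟨⟨?_, fun j => ?_⟩, hγ⟩
  · exact mem_tStress_of_forall_pderiv_mem hγ (fun i => (mem_stressK_iff.mp (hpd i)).1.1) hΔ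
  · refine (isHomogeneous_linDiff _ hγ).eq_zero_of_forall_pderiv_eq_zero (by omega) fun i => ?_
    rw [← linDiff_pderiv_apply]
    exact (mem_stressK_iff.mp (hpd i)).1.2 j

end Stress

section Propagation

variable {n d : ℕ} {V : Fin n → Fin d → ℝ} {Δ : Set (Finset (Fin n))} {c : Fin n → ℝ} {k : ℕ}

theorem eq_zero_of_linDiff_eq_zero_succ
    (hinj : ∀ γ ∈ stressK V Δ k, linDiff c γ = 0 → γ = 0) :
    ∀ γ ∈ stressK V Δ (k + 1), linDiff c γ = 0 → γ = 0 := by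
  intro γ hγ hωγ
  refine (mem_stressK_iff.mp hγ).2.eq_zero_of_forall_pderiv_eq_zero k.succ_ne_zero fun i => ?_
  refine hinj _ (pderiv_mem_stressK hγ i) ?_
  rw [linDiff_pderiv_apply, hωγ, map_zero]

theorem exists_linDiff_eq_succ
    (hsurj : ∀ γ ∈ stressK V Δ k, ∃ γ' ∈ stressK V Δ (k + 1), linDiff c γ' = γ)
    (hinj : ∀ γ ∈ stressK V Δ k, linDiff c γ = 0 → γ = 0)
    (hΔ : ∀ τ, IsMissingFace Δ τ → τ.card ≠ k + 2) :
    ∀ γ ∈ stressK V Δ (k + 1), ∃ γ' ∈ stressK V Δ (k + 2), linDiff c γ' = γ := by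
  intro γ hγ
  choose g hg hωg using fun i => hsurj (pderiv i γ) (pderiv_mem_stressK hγ i)
  have hclosed : ∀ i j, pderiv i (g j) = pderiv j (g i) := fun i j => by
    refine sub_eq_zero.mp <|
      hinj _ (sub_mem (pderiv_mem_stressK (hg j) i) (pderiv_mem_stressK (hg i) j)) ?_
    rw [map_sub, linDiff_pderiv_apply, linDiff_pderiv_apply, hωg, hωg, pderiv_comm, sub_self]
  obtain ⟨γ', hγ'k, hγ'g⟩ :=
    exists_isHomogeneous_pderiv_eq (fun i => (mem_stressK_iff.mp (hg i)).2) hclosed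
  refine ⟨γ', mem_stressK_of_forall_pderiv_mem hγ'k (fun i => hγ'g i ▸ hg i) hΔ, ?_⟩
  refine (isHomogeneous_linDiff c hγ'k).eq_of_forall_pderiv_eq (mem_stressK_iff.mp hγ).2
    k.succ_ne_zero fun i => ?_
  rw [← linDiff_pderiv_apply, hγ'g, hωg]

end Propagation

theorem stmt7_general {n d : ℕ} (V : Fin n → Fin d → ℝ) (Δ : Set (Finset (Fin n)))
    (c : Fin n → ℝ) (k : ℕ)
    (h1 : ToricChordal V Δ (linDiff c) k)
    (h2 : ∀ σ : Finset (Fin n), IsMissingFace Δ σ → σ.card ≠ k + 2) :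
    ToricChordal V Δ (linDiff c) (k + 1) :=
  ⟨exists_linDiff_eq_succ h1.1 h1.2 h2, eq_zero_of_linDiff_eq_zero_succ h1.2⟩

theorem stmt7 {n d : ℕ} (V : Fin n → Fin d → ℝ) (Δ : Set (Finset (Fin n)))
    (hΔ : IsComplex Δ) (hp : IsProper V Δ) (c : Fin n → ℝ) (k : ℕ)
    (h1 : ToricChordal V Δ (linDiff c) k)
    (h2 : ∀ σ : Finset (Fin n), IsMissingFace Δ σ → σ.card ≠ k + 2) :
    ToricChordal V Δ (linDiff c) (k + 1) :=
  stmt7_general V Δ c k h1 h2
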